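/- arXiv:math/0501257 — 5 statements merged into one kernel-verified Lean document; each statement's English description precedes it below -/
import Mathlib

section
/- Define 𝒜_k = (1/n)(n−k+1 + Σ_{j=1}^{k-1} ℙ_{jk}) where (ℙ_{jk}f)(x) replaces x_j by x_j·x_k and x_k by 1. Then 𝒜_k is invertible with inverse 𝒜_k^{-1} = (1/(n−k+1))(n − Σ_{j=1}^{k-1} ℙ_{jk}). -/
/-!
`ℙ_{jk}` is precomposition with the substitution `x ↦ mulSubst j k x`, whose image lies in
`{x | x k = 1}`, where every `mulSubst l k` is the identity. Hence `ℙ_{jk} ℙ_{lk} = ℙ_{jk}`, so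
`S = ∑_{j<k} ℙ_{jk}` satisfies `S² = (k - 1) S`, and with this relation
`(n - k + 1 + S)(n - S) = n (n - k + 1)` in the (noncommutative) ring of operators.
-/

open Function Finset

section
variable {K R : Type*} [Field K] [Ring R] [Algebra K R] {s : R} {a b : K}

theorem smul_one_add_mul_smul_one_sub (hs : s * s = (b - a) • s) :
    (a • 1 + s) * (b • 1 - s) = (a * b) • (1 : R) := by
  simp only [add_mul, mul_sub, smul_mul_assoc, mul_smul_comm, one_mul, mul_one, hs]
  module

theorem smul_one_sub_mul_smul_one_add (hs : s * s = (b - a) • s) :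
    (b • 1 - s) * (a • 1 + s) = (a * b) • (1 : R) := by
  simp only [mul_add, sub_mul, smul_mul_assoc, mul_smul_comm, one_mul, mul_one, hs]
  module

theorem mul_eq_one_and_mul_eq_one_of_mul_self_eq_smul (hs : s * s = (b - a) • s)
    (ha : a ≠ 0) (hb : b ≠ 0) :
    (b⁻¹ • (a • 1 + s)) * (a⁻¹ • (b • 1 - s)) = 1 ∧
      (a⁻¹ • (b • 1 - s)) * (b⁻¹ • (a • 1 + s)) = 1 := by
  have hab : (b⁻¹ * a⁻¹) * (a * b) = 1 := by field_simp
  rw [smul_mul_smul_comm, smul_one_add_mul_smul_one_sub hs, smul_mul_smul_comm,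
    smul_one_sub_mul_smul_one_add hs, smul_smul, smul_smul, mul_comm a⁻¹, hab, one_smul]
  exact ⟨rfl, rfl⟩

end

section
variable {ι R : Type*} [DecidableEq ι] [MulOneClass R] {j k l : ι}

def mulSubst (j k : ι) (x : ι → R) : ι → R :=
  update (update x j (x j * x k)) k 1

theorem mulSubst_apply_self (x : ι → R) : mulSubst j k x k = 1 := update_self k 1 _

theorem mulSubst_of_apply_eq_one {x : ι → R} (hx : x k = 1) : mulSubst l k x = x := by
  rw [mulSubst, hx, mul_one, update_eq_self, ← hx, update_eq_self]

theorem mulSubst_comp_mulSubst :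
    mulSubst l k ∘ mulSubst j k = (mulSubst j k : (ι → R) → ι → R) :=
  funext fun _ => mulSubst_of_apply_eq_one (mulSubst_apply_self _)

end

section
variable {ι R : Type*} [DecidableEq ι] [CommSemiring R] {j k l : ι}

variable (R) in
def mulSubstOp (j k : ι) : Module.End R ((ι → R) → R) :=
  LinearMap.funLeft R R (mulSubst j k)

theorem mulSubstOp_apply (f : (ι → R) → R) (x : ι → R) :
    mulSubstOp R j k f x = f (mulSubst j k x) := rfl

theorem mulSubstOp_mul_mulSubstOp : mulSubstOp R j k * mulSubstOp R l k = mulSubstOp R j k := by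
  rw [mulSubstOp, mulSubstOp, Module.End.mul_eq_comp, ← LinearMap.funLeft_comp,
    mulSubst_comp_mulSubst]

theorem sum_mulSubstOp_mul_self (s : Finset ι) :
    (∑ j ∈ s, mulSubstOp R j k) * (∑ j ∈ s, mulSubstOp R j k) =
      (#s : R) • ∑ j ∈ s, mulSubstOp R j k := by
  simp only [sum_mul_sum, mulSubstOp_mul_mulSubstOp, sum_const, Nat.cast_smul_eq_nsmul,
    ← smul_sum]

end

-- `k : Fin n` is zero-based: the paper's `n - k + 1` is `n - k` here.
/-- With `ℙ_{jk}` substituting `x_j ↦ x_j x_k`, `x_k ↦ 1`, the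
operator `𝒜_k = (1/n)(n−k+1 + ∑_{j<k} ℙ_{jk})` is invertible, with inverse
`𝒜_k⁻¹ = (1/(n−k+1))(n − ∑_{j<k} ℙ_{jk})`.  (Here `k : Fin n` is zero-based,
so the paper's `k` is `k+1` and `n−k+1` becomes `n−k`.) -/
theorem A_k_inverse (n : ℕ)
    (P : Fin n → Fin n → ((Fin n → ℂ) → ℂ) → ((Fin n → ℂ) → ℂ))
    (hP : ∀ j k f x, P j k f x =
      f (Function.update (Function.update x j (x j * x k)) k 1))
    (k : Fin n)
    (A B : ((Fin n → ℂ) → ℂ) → ((Fin n → ℂ) → ℂ))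
    (hA : ∀ f x, A f x = (1 / (n : ℂ)) *
      (((n : ℂ) - (k : ℕ)) * f x + ∑ j ∈ Finset.univ.filter (· < k), P j k f x))
    (hB : ∀ f x, B f x = (1 / ((n : ℂ) - (k : ℕ))) *
      ((n : ℂ) * f x - ∑ j ∈ Finset.univ.filter (· < k), P j k f x)) :
    (∀ f, A (B f) = f) ∧ (∀ f, B (A f) = f) := by
  set S := ∑ j ∈ univ.filter (· < k), mulSubstOp ℂ j k
  have hcard : #(univ.filter (· < k)) = k := by rw [filter_gt_eq_Iio, Fin.card_Iio]
  have hS : S * S = ((n : ℂ) - ((n : ℂ) - (k : ℕ))) • S := by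
    rw [sub_sub_cancel, sum_mulSubstOp_mul_self, hcard]
  have hn : (n : ℂ) ≠ 0 := Nat.cast_ne_zero.mpr k.pos.ne'
  have hnk : (n : ℂ) - (k : ℕ) ≠ 0 := sub_ne_zero.mpr (by exact_mod_cast k.isLt.ne')
  have hA' (f) : A f = ((n : ℂ)⁻¹ • (((n : ℂ) - (k : ℕ)) • 1 + S)) f := by
    funext x
    simp [hA, hP, S, mulSubstOp_apply, mulSubst, LinearMap.sum_apply, mul_add]
  have hB' (f) : B f = (((n : ℂ) - (k : ℕ))⁻¹ • ((n : ℂ) • 1 - S)) f := by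
    funext x
    simp [hB, hP, S, mulSubstOp_apply, mulSubst, LinearMap.sum_apply, mul_sub]
  obtain ⟨hAB, hBA⟩ := mul_eq_one_and_mul_eq_one_of_mul_self_eq_smul hS hnk hn
  exact ⟨fun f => by rw [hB', hA', ← Module.End.mul_apply, hAB, Module.End.one_apply],
    fun f => by rw [hA', hB', ← Module.End.mul_apply, hBA, Module.End.one_apply]⟩
end

section
/- For the polynomials E_λ(x) = e₁(x)^{λ₁−λ₂} e₂(x)^{λ₂−λ₃} ⋯ eₙ(x)^{λₙ}, the differential operators H_j = e_j(x) Σ_{i=1}^n [(−x_i)^{n−j} / ∏_{m≠i}(x_m − x_i)] ∂/∂x_i satisfy H_j E_λ = (λ_j − λ_{j+1}) E_λ for j = 1,…,n (with λ_{n+1} = 0). -/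
/-!
The operator `D = ∑ᵢ (-xᵢ)^{n-j} / ∏_{m≠i} (x_m - xᵢ) ∂ᵢ` is a derivation at `x` dual to the
elementary symmetric polynomials: `D e_k (x) = δ_{jk}`. Indeed `∂ᵢ e_k = e_{k-1}(x without xᵢ)`
is, up to the factor `∏_{m≠i} (x_m - xᵢ)`, the coefficient of `t^{n-k}` in the Lagrange basis
polynomial for the nodes `-x` at the node `-xᵢ`, so the sum over `i` extracts the coefficient of
`t^{n-k}` from the Lagrange interpolant of `t^{n-j}`, which is `t^{n-j}` itself. Leibniz' rule
then gives `e_j D E_λ = (λ_j - λ_{j+1}) E_λ`.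
-/

open Finset

namespace Derivation

variable {R A M ι : Type*} [CommSemiring R] [CommSemiring A] [Algebra R A] [AddCommMonoid M]
  [Module A M] [Module R M]

theorem leibniz_prod [DecidableEq ι] (D : Derivation R A M) (s : Finset ι) (f : ι → A) :
    D (∏ k ∈ s, f k) = ∑ k ∈ s, (∏ l ∈ s.erase k, f l) • D (f k) := by
  induction s using Finset.induction with
  | empty => simp
  | @insert a s ha ih =>
    rw [prod_insert ha, leibniz, ih, sum_insert ha, erase_insert ha, smul_sum, add_comm]
    congr 1
    refine sum_congr rfl fun k hk => ?_
    rw [erase_insert_of_ne (ne_of_mem_of_not_mem hk ha).symm,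
      prod_insert (fun h => ha (mem_of_mem_erase h)), smul_smul]

theorem map_mul_map_apply_prod_pow_of_dual {B : Type*} [CommSemiring B] [Fintype ι]
    [DecidableEq ι] (D : Derivation R A A) (φ : A →+* B) (a : ι → A) (m : ι → ℕ) {j : ι}
    (hj : φ (D (a j)) = 1) (hk : ∀ k ≠ j, φ (D (a k)) = 0) :
    φ (a j) * φ (D (∏ k, a k ^ m k)) = m j * φ (∏ k, a k ^ m k) := by
  rw [leibniz_prod, map_sum, sum_eq_single j (fun k _ hkj => by
      simp only [leibniz_pow, smul_eq_mul, nsmul_eq_mul, map_mul, hk k hkj, mul_zero])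
    (fun h => (h (mem_univ j)).elim), ← mul_prod_erase univ _ (mem_univ j)]
  simp only [leibniz_pow, smul_eq_mul, nsmul_eq_mul, map_mul, _root_.map_natCast, map_pow, hj]
  rcases eq_or_ne (m j) 0 with h | h
  · simp [h]
  · rw [← mul_pow_sub_one h (φ (a j))]
    ring

theorem finsetSum_apply (s : Finset ι) (D : ι → Derivation R A M) (a : A) :
    (∑ i ∈ s, D i) a = ∑ i ∈ s, D i a := by
  simpa only [coeFnAddMonoidHom_apply, Finset.sum_apply] using
    congrFun (map_sum coeFnAddMonoidHom D s) a

end Derivation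

namespace Lagrange

variable {F ι : Type*} [Field F] [DecidableEq ι] {s : Finset ι} {v : ι → F}

theorem sum_pow_mul_coeff_basis (hvs : Set.InjOn v s) {r : ℕ} (hr : r < #s) (c : ℕ) :
    ∑ i ∈ s, v i ^ r * (Lagrange.basis s v i).coeff c = if c = r then 1 else 0 := by
  have h := congrArg (Polynomial.coeff · c) (eq_interpolate (f := Polynomial.X ^ r) hvs (by
    rw [Polynomial.degree_X_pow]; exact_mod_cast hr))
  simpa [interpolate_apply, Polynomial.finsetSum_coeff, ← map_pow, Polynomial.coeff_C_mul,
    Polynomial.coeff_X_pow] using h.symm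

theorem coeff_basis {i : ι} (hi : i ∈ s) {c : ℕ} (hc : c ≤ #(s.erase i)) :
    (Lagrange.basis s v i).coeff c =
      nodalWeight s v i * ∑ t ∈ (s.erase i).powersetCard (#(s.erase i) - c), ∏ m ∈ t, -v m := by
  rw [basis_eq_prod_sub_inv_mul_nodal_div hi, ← nodal_erase_eq_nodal_div hi,
    Polynomial.coeff_C_mul, nodal, ← Finset.prod_X_add_C_coeff _ _ hc]
  simp [sub_eq_add_neg]

end Lagrange

namespace MvPolynomial

variable {R σ : Type*} [CommSemiring R]

theorem pderiv_prod_X_of_notMem {i : σ} {t : Finset σ} (hi : i ∉ t) :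
    pderiv i (∏ m ∈ t, X m : MvPolynomial σ R) = 0 := by
  classical
  rw [Derivation.leibniz_prod]
  exact sum_eq_zero fun m hm => by rw [pderiv_X_of_ne (ne_of_mem_of_not_mem hm hi), smul_zero]

theorem pderiv_esymm_succ [Fintype σ] [DecidableEq σ] (i : σ) (k : ℕ) :
    pderiv i (esymm σ R (k + 1)) = ∑ t ∈ (univ.erase i).powersetCard k, ∏ m ∈ t, X m := by
  have hi : i ∉ univ.erase i := notMem_erase i univ
  have hnot : ∀ {l}, ∀ t ∈ (univ.erase i).powersetCard l, i ∉ t :=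
    fun t ht h => hi ((mem_powersetCard.mp ht).1 h)
  have hdisj : Disjoint ((univ.erase i).powersetCard (k + 1))
      (((univ.erase i).powersetCard k).image (insert i)) := by
    refine disjoint_left.mpr fun t ht ht' => ?_
    obtain ⟨u, -, rfl⟩ := mem_image.mp ht'
    exact hnot _ ht (mem_insert_self i u)
  have hinj : Set.InjOn (insert i) ((univ.erase i).powersetCard k : Set (Finset σ)) :=
    fun t ht u hu h => by rw [← erase_insert (hnot t ht), h, erase_insert (hnot u hu)]
  conv_lhs => rw [esymm, ← insert_erase (mem_univ i), powersetCard_succ_insert hi]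
  rw [sum_union hdisj, map_add, map_sum, sum_eq_zero fun t ht => pderiv_prod_X_of_notMem
    (hnot t ht), zero_add, sum_image hinj, map_sum]
  refine sum_congr rfl fun t ht => ?_
  rw [prod_insert (hnot t ht), pderiv_mul, pderiv_X_self, pderiv_prod_X_of_notMem (hnot t ht),
    mul_zero, add_zero, one_mul]

theorem eval_sum_smul_pderiv [Fintype σ] (c x : σ → R) (p : MvPolynomial σ R) :
    eval x ((∑ i, c i • pderiv i : Derivation R (MvPolynomial σ R) (MvPolynomial σ R)) p) =
      ∑ i, c i * eval x (pderiv i p) := by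
  simp [Derivation.finsetSum_apply]

theorem sum_div_prod_sub_mul_eval_pderiv_esymm {F : Type*} [Field F] [Fintype σ] [DecidableEq σ]
    {x : σ → F} (hx : Function.Injective x) {r k : ℕ} (hr : r < Fintype.card σ)
    (hk : k < Fintype.card σ) :
    ∑ i, ((-(x i)) ^ r / ∏ m ∈ univ.erase i, (x m - x i)) *
        eval x (pderiv i (esymm σ F (k + 1))) = if k + r + 1 = Fintype.card σ then 1 else 0 := by
  have hcard : ∀ i : σ, #(univ.erase i) = Fintype.card σ - 1 := fun i => by
    rw [card_erase_of_mem (mem_univ i), card_univ]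
  have h := Lagrange.sum_pow_mul_coeff_basis (s := univ) (v := -x)
    ((neg_injective.comp hx).injOn) (r := r) (by rwa [card_univ]) (Fintype.card σ - 1 - k)
  convert h using 2 with i
  · rw [Lagrange.coeff_basis (mem_univ i) (by rw [hcard]; omega), pderiv_esymm_succ, hcard,
      show Fintype.card σ - 1 - (Fintype.card σ - 1 - k) = k by omega]
    simp [Lagrange.nodalWeight, div_eq_mul_inv, prod_inv_distrib, neg_add_eq_sub, mul_assoc]
  · omega

end MvPolynomial

open MvPolynomial

/-- For `E_λ = e₁^{λ₁−λ₂} ⋯ eₙ^{λₙ}`, the first-order operators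
`H_j = e_j(x) ∑_i (−x_i)^{n−j} / ∏_{m≠i}(x_m−x_i) ∂/∂x_i` satisfy
`H_j E_λ = (λ_j − λ_{j+1}) E_λ` (with `λ_{n+1} = 0`), at every point with
pairwise distinct coordinates. -/
theorem H_eigen_E (n : ℕ) (lam : Fin n → ℕ) (hlam : Antitone lam)
    (nxt : Fin n → ℕ)
    (hnxt : ∀ j : Fin n, nxt j = if h : (j : ℕ) + 1 < n then lam ⟨(j : ℕ) + 1, h⟩ else 0)
    (E : MvPolynomial (Fin n) ℂ)
    (hE : E = ∏ j : Fin n, (esymm (Fin n) ℂ ((j : ℕ) + 1)) ^ (lam j - nxt j))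
    (j : Fin n) (x : Fin n → ℂ) (hx : Function.Injective x) :
    eval x (esymm (Fin n) ℂ ((j : ℕ) + 1)) *
        ∑ i : Fin n, ((-(x i)) ^ (n - ((j : ℕ) + 1)) /
            ∏ m ∈ Finset.univ.erase i, (x m - x i)) * eval x (pderiv i E)
      = ((lam j : ℂ) - (nxt j : ℂ)) * eval x E := by
  have hdelta : ∀ k : Fin n, ∑ i : Fin n, ((-(x i)) ^ (n - ((j : ℕ) + 1)) /
      ∏ m ∈ Finset.univ.erase i, (x m - x i)) *
        eval x (pderiv i (esymm (Fin n) ℂ ((k : ℕ) + 1))) = if k = j then 1 else 0 := fun k => by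
    have hj := j.isLt
    rw [sum_div_prod_sub_mul_eval_pderiv_esymm hx (by rw [Fintype.card_fin]; omega)
      (by rw [Fintype.card_fin]; exact k.isLt)]
    exact if_congr (by rw [Fintype.card_fin, Fin.ext_iff]; omega) rfl rfl
  have hle : nxt j ≤ lam j := by
    rw [hnxt j]
    split_ifs
    exacts [hlam (Fin.le_def.mpr (Nat.le_succ _)), Nat.zero_le _]
  rw [← eval_sum_smul_pderiv, hE, ← Nat.cast_sub hle]
  exact Derivation.map_mul_map_apply_prod_pow_of_dual _ (eval x)
    (fun k : Fin n => esymm (Fin n) ℂ ((k : ℕ) + 1)) (fun k => lam k - nxt k)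
    (by rw [eval_sum_smul_pderiv, hdelta, if_pos rfl])
    (fun k hk => by rw [eval_sum_smul_pderiv, hdelta, if_neg hk])
end

section
/- For a partition λ with μ = λ + δ (δ = (n−1,…,1,0)), the polynomial φ_λ(z) = Σ_{j=1}^n c_j z^{μ_j} with c_j = ∏_{k≠j}(μ_j − μ_k)^{-1} is divisible by (z−1)^{n−1}, i.e., its derivatives of orders 0 through n−2 vanish at z = 1. -/
/-!
The coefficient `c_j` is the Lagrange nodal weight of the node `μ_j`, and
`φ^{(k)}(1) = ∑_j c_j μ_j (μ_j - 1) ⋯ (μ_j - k + 1)` is the nodal-weighted sum of the values at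
the nodes of the descending Pochhammer polynomial of degree `k`. By Lagrange interpolation such a
sum is the coefficient of `X^{n-1}` of that polynomial, which vanishes as soon as `k < n - 1`.
-/

open Finset Polynomial

namespace Lagrange

theorem sum_nodalWeight_mul_eval_eq_zero {F ι : Type*} [Field F] [DecidableEq ι]
    {s : Finset ι} {v : ι → F} (hvs : Set.InjOn v s) {P : F[X]} (hP : P.degree < ↑(#s - 1)) :
    ∑ i ∈ s, nodalWeight s v i * P.eval (v i) = 0 := by
  have hPs : P.degree < #s := hP.trans_le (by exact_mod_cast Nat.sub_le _ _)
  calc ∑ i ∈ s, nodalWeight s v i * P.eval (v i)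
      = P.coeff (#s - 1) := by
        rw [coeff_eq_sum hvs hPs]
        refine sum_congr rfl fun i _ => ?_
        rw [nodalWeight, prod_inv_distrib, div_eq_inv_mul, mul_comm]
    _ = 0 := coeff_eq_zero_of_degree_lt hP

end Lagrange

theorem iteratedDeriv_sum_mul_pow {𝕜 ι : Type*} [NontriviallyNormedField 𝕜] (s : Finset ι)
    (c : ι → 𝕜) (m : ι → ℕ) (k : ℕ) (x : 𝕜) :
    iteratedDeriv k (fun z ↦ ∑ j ∈ s, c j * z ^ m j) x =
      ∑ j ∈ s, c j * ((m j).descFactorial k * x ^ (m j - k)) := by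
  rw [iteratedDeriv_fun_sum fun j _ ↦ by fun_prop]
  simp only [iteratedDeriv_const_mul_field, iteratedDeriv_pow]

/-- For strictly decreasing nonnegative integers
`μ₁ > … > μₙ` (coming from `μ = λ + δ`), the polynomial
`φ_λ(z) = ∑_j c_j z^{μ_j}`, `c_j = ∏_{k≠j}(μ_j−μ_k)⁻¹`, is divisible by
`(z−1)^{n−1}`: its derivatives of orders `0,…,n−2` vanish at `z = 1`. -/
theorem phi_derivatives_vanish (n : ℕ) (mu : Fin n → ℕ) (hmu : StrictAnti mu)
    (phi : ℂ → ℂ)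
    (hphi : ∀ z, phi z = ∑ j : Fin n,
      (∏ k ∈ Finset.univ.erase j, ((mu j : ℂ) - (mu k : ℂ))⁻¹) * z ^ mu j)
    (k : ℕ) (hk : k + 1 < n) :
    iteratedDeriv k phi 1 = 0 := by
  have hphi' : phi = fun z ↦ ∑ j, Lagrange.nodalWeight univ (fun j ↦ (mu j : ℂ)) j * z ^ mu j :=
    funext hphi
  have hinj : Set.InjOn (fun j ↦ (mu j : ℂ)) (univ : Finset (Fin n)) :=
    fun a _ b _ h ↦ hmu.injective (Nat.cast_injective h)
  have hdeg : (descPochhammer ℂ k).degree < ↑(#(univ : Finset (Fin n)) - 1) := by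
    rw [degree_eq_natDegree (monic_descPochhammer ℂ k).ne_zero, descPochhammer_natDegree,
      card_univ, Fintype.card_fin]
    exact_mod_cast Nat.lt_sub_of_add_lt hk
  rw [hphi', iteratedDeriv_sum_mul_pow]
  simpa [descPochhammer_eval_eq_descFactorial] using
    Lagrange.sum_nodalWeight_mul_eval_eq_zero hinj hdeg
end

section
/- For real numbers v₁ < v₂ < … < v_{m+1}, the iterated integral ∫_{v₁}^{v₂} du₁ ⋯ ∫_{v_m}^{v_{m+1}} du_m of the Vandermonde determinant Δ_m(u) = ∏_{i<j}(u_i − u_j) equals ((−1)^m / m!) · Δ_{m+1}(v). -/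
/-!
Up to the sign `(-1)^(m choose 2)`, the integrand is the Vandermonde determinant of `u`. Since its
`i`-th row depends only on `u i`, expanding by Leibniz and applying Fubini to each term shows
that its integral over the box is the determinant of the one-variable integrals
`∫_{v_i}^{v_{i+1}} t^j dt = (v_{i+1}^{j+1} - v_i^{j+1}) / (j+1)`. These are the successive
differences of the rows of `V(v) · diag(1, 1, 1/2, …, 1/m)`, whose first column is constant, so
that determinant is `det V(v) / m!`. Comparing the signs `(m+1 choose 2) = (m choose 2) + m`
gives the factor `(-1)^m`.
-/

open MeasureTheory Matrix Finset

theorem Matrix.det_eq_det_succ_sub_castSucc {R : Type*} [CommRing R] {m : ℕ}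
    (M : Matrix (Fin (m + 1)) (Fin (m + 1)) R) (h : ∀ i, M i 0 = 1) :
    M.det = (of fun i j : Fin m => M i.succ j.succ - M i.castSucc j.succ).det := by
  rw [det_eq_of_forall_row_eq_smul_add_pred (fun _ => 1) (A := M)
      (B := of fun i j => Fin.cases (M 0 j) (fun i => M i.succ j - M i.castSucc j) i)
      (fun j => rfl) (fun i j => by simp), det_succ_column_zero, Fin.sum_univ_succ]
  simp [h, Matrix.submatrix]

theorem Fin.sum_card_Ioi (n : ℕ) : ∑ i : Fin n, #(Ioi i) = n.choose 2 := by
  simp_rw [Fin.card_Ioi]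
  rw [Fin.sum_univ_eq_sum_range (fun i => n - 1 - i), sum_range_reflect (fun i => i) n,
    sum_range_id, Nat.choose_two_right]

theorem Matrix.prod_filter_lt_sub_eq_neg_one_pow_mul_det_vandermonde {R : Type*} [CommRing R]
    {n : ℕ} (w : Fin n → R) :
    ∏ i, ∏ j ∈ univ.filter (fun j => i < j), (w i - w j)
      = (-1) ^ n.choose 2 * (vandermonde w).det := by
  have hflip : ∀ i : Fin n,
      ∏ j ∈ Ioi i, (w i - w j) = (-1) ^ #(Ioi i) * ∏ j ∈ Ioi i, (w j - w i) := by
    intro i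
    rw [← prod_const, ← prod_mul_distrib]
    exact prod_congr rfl fun _ _ => by ring
  simp_rw [filter_lt_eq_Ioi, hflip, prod_mul_distrib, prod_pow_eq_pow_sum, Fin.sum_card_Ioi,
    det_vandermonde]

theorem Matrix.det_pow_succ_sub_div {K : Type*} [Field K] [CharZero K] {m : ℕ}
    (v : Fin (m + 1) → K) :
    (of fun i j : Fin m =>
        (v i.succ ^ ((j : ℕ) + 1) - v i.castSucc ^ ((j : ℕ) + 1)) / ((j : ℕ) + 1)).det
      = (m.factorial : K)⁻¹ * (vandermonde v).det := by
  set d : Fin (m + 1) → K := Fin.cons 1 fun k => ((k : ℕ) + 1 : K)⁻¹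
  have hd : ∏ k, d k = (m.factorial : K)⁻¹ := by
    rw [Fin.prod_cons, one_mul, prod_inv_distrib,
      Fin.prod_univ_eq_prod_range (fun k => (k : K) + 1), ← prod_range_add_one_eq_factorial]
    push_cast
    rfl
  rw [← hd, mul_comm, ← det_diagonal, ← det_mul,
    det_eq_det_succ_sub_castSucc _ fun i => by simp [d, mul_diagonal]]
  congr 1
  ext i j
  simp [d, mul_diagonal, div_eq_mul_inv, sub_mul]

theorem MeasureTheory.integral_det_pi_eq_det_integral {ι α 𝕜 : Type*} [Fintype ι]
    [DecidableEq ι] [RCLike 𝕜] {mα : MeasurableSpace α} (μ : ι → Measure α)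
    [∀ i, SigmaFinite (μ i)] (f : ι → ι → α → 𝕜) (hf : ∀ i j, Integrable (f i j) (μ j)) :
    ∫ x, (of fun i j => f i j (x j)).det ∂Measure.pi μ
      = (of fun i j => ∫ t, f i j t ∂μ j).det := by
  simp_rw [det_apply', of_apply]
  rw [integral_finsetSum _ fun σ _ => (Integrable.fintype_prod fun i => hf (σ i) i).const_mul _]
  simp_rw [integral_const_mul, integral_fintype_prod_eq_prod]

theorem setIntegral_det_vandermonde_pi_Icc {m : ℕ} {v : Fin (m + 1) → ℝ} (hv : Monotone v) :
    ∫ u : Fin m → ℝ in Set.univ.pi (fun i => Set.Icc (v i.castSucc) (v i.succ)),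
        (vandermonde u).det
      = (m.factorial : ℝ)⁻¹ * (vandermonde v).det := by
  have hpow : ∀ (i : Fin m) (j : ℕ), ∫ t in Set.Icc (v i.castSucc) (v i.succ), t ^ j
      = (v i.succ ^ (j + 1) - v i.castSucc ^ (j + 1)) / (j + 1) := by
    intro i j
    rw [integral_Icc_eq_integral_Ioc, ← intervalIntegral.integral_of_le
      (hv Fin.castSucc_lt_succ.le), integral_pow]
  have htr : ∀ u : Fin m → ℝ, (vandermonde u).det = (vandermonde u)ᵀ.det :=
    fun u => (det_transpose _).symm
  simp_rw [htr]
  rw [← det_pow_succ_sub_div, ← det_transpose (of _), volume_pi, Measure.restrict_pi_pi]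
  refine (integral_det_pi_eq_det_integral _ (fun (i _ : Fin m) (t : ℝ) => t ^ (i : ℕ))
    fun i j => (continuous_pow _).integrableOn_Icc).trans ?_
  congr 1
  ext i j
  simp [hpow]

/-- For `v₁ < v₂ < … < v_{m+1}`, the iterated integral of the
Vandermonde determinant `Δ_m(u) = ∏_{i<j}(u_i−u_j)`, with each `u_i` ranging
over `[v_i, v_{i+1}]`, equals `((−1)^m / m!) · Δ_{m+1}(v)`. -/
theorem integral_vandermonde (m : ℕ) (v : Fin (m + 1) → ℝ) (hv : StrictMono v) :
    ∫ u : Fin m → ℝ in Set.univ.pi (fun i : Fin m => Set.Icc (v i.castSucc) (v i.succ)),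
        ∏ i : Fin m, ∏ j ∈ Finset.univ.filter (fun j : Fin m => i < j), (u i - u j)
      = ((-1 : ℝ) ^ m / (m.factorial : ℝ)) *
        ∏ i : Fin (m + 1), ∏ j ∈ Finset.univ.filter (fun j : Fin (m + 1) => i < j),
          (v i - v j) := by
  simp_rw [prod_filter_lt_sub_eq_neg_one_pow_mul_det_vandermonde]
  rw [integral_const_mul, setIntegral_det_vandermonde_pi_Icc hv.monotone,
    Nat.choose_succ_succ', Nat.choose_one_right, pow_add]
  have hsq : ((-1 : ℝ) ^ m) ^ 2 = 1 := by rw [← pow_mul, pow_mul', neg_one_sq, one_pow]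
  linear_combination (-(m.factorial : ℝ)⁻¹ * (-1) ^ m.choose 2 * (vandermonde v).det) * hsq
end

section
/- Let Kₙ = ∏_{i<j}(D_i − D_j) with D_i = x_i ∂/∂x_i, and let φ_λ(z) = Σ_{j=1}^n c_j z^{μ_j} with c_j = ∏_{k≠j}(μ_j − μ_k)^{-1}, μ = λ + δ. Then Kₙ applied to ∏_{i=1}^n φ_λ(x_i) equals (c₁⋯cₙ) Δₙ(μ) · a_μ(x) = (−1)^{n(n−1)/2} a_μ(x)/Δₙ(μ), where a_μ(x) = det(x_i^{μ_j}). -/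
/-!
Each Euler operator `D_i = x_i ∂/∂x_i` acts diagonally on monomials, multiplying `x^m` by `m_i`.
Expanding `∏_i φ_λ(x_i) = ∑_{g : [n] → [n]} (∏_i c_{g i}) x^{μ ∘ g}`, the operator `Kₙ` multiplies
the `g`-term by `Δₙ(μ ∘ g)`. The resulting sum is the expansion of `det (A V)` along the rows of
`A`, where `A_{ij} = c_j x_i^{μ_j}` and `V` is the Vandermonde matrix of `-μ`; hence it equals
`det A · det V = (c₁⋯cₙ) a_μ(x) Δₙ(μ)`. The second form follows from
`∏_j ∏_{k ≠ j} (μ_j - μ_k) = (-1)^{n(n-1)/2} Δₙ(μ)²`.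
-/

open Finset

section EulerOperator

variable {𝕜 : Type*} [NontriviallyNormedField 𝕜] {n : ℕ}

noncomputable def eulerDiff (p : Fin n × Fin n) (f : (Fin n → 𝕜) → 𝕜) (x : Fin n → 𝕜) : 𝕜 :=
  x p.1 * fderiv 𝕜 f x (Pi.single p.1 1) - x p.2 * fderiv 𝕜 f x (Pi.single p.2 1)

theorem mul_fderiv_prod_pow_apply_single (m : Fin n → ℕ) (x : Fin n → 𝕜) (i : Fin n) :
    x i * fderiv 𝕜 (fun y : Fin n → 𝕜 => ∏ k, y k ^ m k) x (Pi.single i 1)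
      = m i * ∏ k, x k ^ m k := by
  have hderiv : HasFDerivAt (fun y : Fin n → 𝕜 => ∏ k, y k ^ m k)
      (∑ k, (∏ j ∈ univ.erase k, x j ^ m j) •
        ((m k • x k ^ (m k - 1)) • ContinuousLinearMap.proj k)) x :=
    HasFDerivAt.finsetProd fun k _ =>
      (hasFDerivAt_apply (𝕜 := 𝕜) (F' := fun _ : Fin n => 𝕜) k x).pow (m k)
  have hpow : x i * (m i * x i ^ (m i - 1)) = m i * x i ^ m i := by
    cases m i with
    | zero => simp
    | succ k => rw [Nat.add_sub_cancel, pow_succ]; push_cast; ring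
  rw [hderiv.fderiv, ← mul_prod_erase univ _ (mem_univ i)]
  simp only [_root_.sum_apply, _root_.smul_apply, ContinuousLinearMap.proj_apply, Pi.single_apply,
    nsmul_eq_mul, smul_eq_mul, mul_ite, mul_one, mul_zero, sum_ite_eq', mem_univ, ↓reduceIte]
  linear_combination (∏ j ∈ univ.erase i, x j ^ m j) * hpow

theorem mul_fderiv_sum_mul_prod_pow_apply_single {ι : Type*} [Fintype ι] (a : ι → 𝕜)
    (e : ι → Fin n → ℕ) (x : Fin n → 𝕜) (i : Fin n) :
    x i * fderiv 𝕜 (fun y : Fin n → 𝕜 => ∑ s, a s * ∏ k, y k ^ e s k) x (Pi.single i 1)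
      = ∑ s, a s * e s i * ∏ k, x k ^ e s k := by
  rw [fderiv_fun_sum fun s _ => by fun_prop]
  simp only [_root_.sum_apply, mul_sum]
  refine sum_congr rfl fun s _ => ?_
  rw [fderiv_const_mul (by fun_prop), _root_.smul_apply, smul_eq_mul,
    mul_left_comm, mul_fderiv_prod_pow_apply_single, mul_assoc]

theorem eulerDiff_sum_mul_prod_pow {ι : Type*} [Fintype ι] (p : Fin n × Fin n) (a : ι → 𝕜)
    (e : ι → Fin n → ℕ) :
    eulerDiff p (fun x => ∑ s, a s * ∏ k, x k ^ e s k)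
      = fun x => ∑ s, a s * ((e s p.1 : 𝕜) - e s p.2) * ∏ k, x k ^ e s k := by
  funext x
  rw [eulerDiff, mul_fderiv_sum_mul_prod_pow_apply_single,
    mul_fderiv_sum_mul_prod_pow_apply_single, ← sum_sub_distrib]
  exact sum_congr rfl fun s _ => by ring

theorem foldr_eulerDiff_sum_mul_prod_pow {ι : Type*} [Fintype ι] (L : List (Fin n × Fin n))
    (a : ι → 𝕜) (e : ι → Fin n → ℕ) :
    L.foldr eulerDiff (fun x => ∑ s, a s * ∏ k, x k ^ e s k)
      = fun x => ∑ s, a s * (L.map fun p => (e s p.1 - e s p.2 : 𝕜)).prod * ∏ k, x k ^ e s k := by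
  induction L with
  | nil => simp
  | cons p L ih =>
    rw [List.foldr_cons, ih, eulerDiff_sum_mul_prod_pow]
    simp only [List.map_cons, List.prod_cons, mul_assoc, mul_left_comm]

end EulerOperator

section PairProducts

variable {ι M : Type*} [Fintype ι] [LinearOrder ι] [CommMonoid M]

theorem prod_filter_fst_lt_snd (f : ι → ι → M) :
    ∏ p ∈ univ.filter (fun p : ι × ι => p.1 < p.2), f p.1 p.2
      = ∏ i, ∏ j ∈ univ.filter (i < ·), f i j := by
  simp_rw [prod_filter, Fintype.prod_prod_type]

theorem prod_prod_erase_eq_prod_prod_lt (f : ι → ι → M) :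
    ∏ i, ∏ j ∈ univ.erase i, f i j = ∏ i, ∏ j ∈ univ.filter (i < ·), f i j * f j i := by
  have hsplit : ∀ i, ∏ j ∈ univ.erase i, f i j
      = (∏ j ∈ univ.filter (i < ·), f i j) * ∏ j ∈ univ.filter (· < i), f i j := by
    intro i
    rw [← prod_filter_mul_prod_filter_not (univ.erase i) (i < ·)]
    congr 2 <;> ext j <;> simp <;> grind
  have hswap : ∏ i, ∏ j ∈ univ.filter (· < i), f i j = ∏ i, ∏ j ∈ univ.filter (i < ·), f j i :=
    prod_comm' fun i j => by simp
  simp_rw [hsplit, prod_mul_distrib, hswap]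

theorem prod_prod_filter_lt_const (a : M) :
    ∏ i : ι, ∏ _j ∈ univ.filter (i < ·), a = a ^ (Fintype.card ι).choose 2 := by
  rw [← prod_filter_fst_lt_snd fun _ _ => a, prod_const, ← card_univ, ← card_product_filter_lt,
    univ_product_univ]

end PairProducts

section VandermondeProduct

variable {R : Type*} [CommRing R]

def vandermondeProd {ι : Type*} [Fintype ι] [LinearOrder ι] (v : ι → R) : R :=
  ∏ i, ∏ j ∈ univ.filter (i < ·), (v i - v j)

variable {n : ℕ}

theorem vandermondeProd_eq_det_vandermonde (v : Fin n → R) :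
    vandermondeProd v = (Matrix.vandermonde (-v)).det := by
  rw [Matrix.det_vandermonde, vandermondeProd]
  refine prod_congr rfl fun i _ => ?_
  rw [filter_lt_eq_Ioi]
  exact prod_congr rfl fun j _ => by simp only [Pi.neg_apply]; ring

theorem Matrix.det_mul_eq_sum_prod_mul_det_submatrix {ι : Type*} [Fintype ι] [DecidableEq ι]
    (A B : Matrix ι ι R) :
    (A * B).det = ∑ g : ι → ι, (∏ i, A i (g i)) * (B.submatrix g id).det := by
  have hrows : A * B = Matrix.of fun i => ∑ j, A i j • B j := by
    ext i k; simp [Matrix.mul_apply]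
  have hexp := (Matrix.detRowAlternating (R := R) (n := ι)).toMultilinearMap.map_sum
    fun i j => A i j • B j
  rw [hrows]
  refine hexp.trans (sum_congr rfl fun g _ => ?_)
  exact (Matrix.detRowAlternating (R := R) (n := ι)).map_smul_univ _ _

theorem sum_prod_mul_vandermondeProd_comp (A : Matrix (Fin n) (Fin n) R) (v : Fin n → R) :
    ∑ g : Fin n → Fin n, (∏ i, A i (g i)) * vandermondeProd (v ∘ g)
      = A.det * vandermondeProd v := by
  simp_rw [vandermondeProd_eq_det_vandermonde, ← Matrix.det_mul,
    Matrix.det_mul_eq_sum_prod_mul_det_submatrix]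
  rfl

theorem sum_prod_mul_vandermondeProd_comp_mul_prod_pow (c v x : Fin n → R) (m : Fin n → ℕ) :
    ∑ g : Fin n → Fin n, (∏ i, c (g i)) * vandermondeProd (v ∘ g) * ∏ k, x k ^ m (g k)
      = (∏ j, c j) * vandermondeProd v * (Matrix.of fun i j => x i ^ m j).det := by
  rw [mul_right_comm, ← Matrix.det_mul_row, ← sum_prod_mul_vandermondeProd_comp]
  refine sum_congr rfl fun g _ => ?_
  simp only [Matrix.of_apply, prod_mul_distrib]
  ring

variable {ι : Type*} [Fintype ι] [LinearOrder ι]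

theorem prod_prod_erase_sub (v : ι → R) :
    ∏ i, ∏ j ∈ univ.erase i, (v i - v j)
      = (-1) ^ (Fintype.card ι).choose 2 * vandermondeProd v ^ 2 := by
  rw [prod_prod_erase_eq_prod_prod_lt, vandermondeProd, ← prod_prod_filter_lt_const, ← prod_pow,
    ← prod_mul_distrib]
  refine prod_congr rfl fun i _ => ?_
  rw [← prod_pow, ← prod_mul_distrib]
  exact prod_congr rfl fun j _ => by ring

theorem vandermondeProd_ne_zero [IsDomain R] {v : ι → R} (hv : Function.Injective v) :
    vandermondeProd v ≠ 0 :=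
  prod_ne_zero_iff.mpr fun _ _ => prod_ne_zero_iff.mpr fun _ hj =>
    sub_ne_zero.mpr (hv.ne (mem_filter.mp hj).2.ne)

theorem inv_prod_prod_erase_sub_mul_vandermondeProd {K : Type*} [Field K] {v : ι → K}
    (hv : Function.Injective v) :
    (∏ i, ∏ j ∈ univ.erase i, (v i - v j))⁻¹ * vandermondeProd v
      = (-1) ^ (Fintype.card ι).choose 2 / vandermondeProd v := by
  have hΔ := vandermondeProd_ne_zero hv
  rw [prod_prod_erase_sub, mul_inv, ← inv_pow, inv_neg_one]
  field_simp

end VandermondeProduct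

/-- Let `Kₙ = ∏_{i<j}(D_i − D_j)` with Euler operators
`D_i = x_i ∂/∂x_i`, and `φ_λ(z) = ∑_j c_j z^{μ_j}`,
`c_j = ∏_{k≠j}(μ_j−μ_k)⁻¹`, for strictly decreasing `μ = λ + δ`.  Then
`Kₙ ∏_i φ_λ(x_i) = (c₁⋯cₙ) Δₙ(μ) a_μ(x) = (−1)^{n(n−1)/2} a_μ(x)/Δₙ(μ)`,
where `a_μ(x) = det(x_i^{μ_j})`. -/
theorem K_factorized_phi (n : ℕ) (mu : Fin n → ℕ) (hmu : StrictAnti mu)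
    (c : Fin n → ℂ)
    (hc : ∀ j : Fin n, c j = ∏ k ∈ Finset.univ.erase j, ((mu j : ℂ) - (mu k : ℂ))⁻¹)
    (phi : ℂ → ℂ) (hphi : ∀ z, phi z = ∑ j : Fin n, c j * z ^ mu j)
    (F : (Fin n → ℂ) → ℂ) (hF : ∀ x, F x = ∏ i : Fin n, phi (x i))
    (step : Fin n × Fin n → ((Fin n → ℂ) → ℂ) → ((Fin n → ℂ) → ℂ))
    (hstep : ∀ p f x, step p f x =
      x p.1 * fderiv ℂ f x (Pi.single p.1 1) - x p.2 * fderiv ℂ f x (Pi.single p.2 1)) :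
    ((Finset.univ.filter (fun p : Fin n × Fin n => p.1 < p.2)).toList.foldr step F)
      = (fun x => ((∏ j : Fin n, c j) *
          ∏ i : Fin n, ∏ j ∈ Finset.univ.filter (fun j : Fin n => i < j),
            ((mu i : ℂ) - (mu j : ℂ))) *
          Matrix.det (Matrix.of fun i j : Fin n => x i ^ mu j)) ∧
    ((Finset.univ.filter (fun p : Fin n × Fin n => p.1 < p.2)).toList.foldr step F)
      = (fun x => (-1 : ℂ) ^ (n * (n - 1) / 2) *
          Matrix.det (Matrix.of fun i j : Fin n => x i ^ mu j) /
          ∏ i : Fin n, ∏ j ∈ Finset.univ.filter (fun j : Fin n => i < j),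
            ((mu i : ℂ) - (mu j : ℂ))) := by
  obtain rfl : step = eulerDiff := funext fun p => funext fun f => funext (hstep p f)
  have hmu_inj : Function.Injective fun i => (mu i : ℂ) := Nat.cast_injective.comp hmu.injective
  have hc_prod : ∏ j, c j = (∏ j, ∏ k ∈ univ.erase j, ((mu j : ℂ) - mu k))⁻¹ := by
    simp_rw [hc, prod_inv_distrib]
  have hF_expand : F = fun x => ∑ g : Fin n → Fin n, (∏ i, c (g i)) * ∏ k, x k ^ mu (g k) := by
    funext x
    simp_rw [hF, hphi, prod_univ_sum, Fintype.piFinset_univ, prod_mul_distrib]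
  have hK : (univ.filter fun p : Fin n × Fin n => p.1 < p.2).toList.foldr eulerDiff F
      = fun x => (∏ j, c j) * vandermondeProd (fun i => (mu i : ℂ)) *
          (Matrix.of fun i j => x i ^ mu j).det := by
    rw [hF_expand, foldr_eulerDiff_sum_mul_prod_pow]
    funext x
    rw [← sum_prod_mul_vandermondeProd_comp_mul_prod_pow]
    refine sum_congr rfl fun g _ => ?_
    rw [prod_map_toList, prod_filter_fst_lt_snd fun i j => (mu (g i) : ℂ) - mu (g j)]
    rfl
  refine ⟨hK, hK.trans (funext fun x => ?_)⟩
  rw [hc_prod, inv_prod_prod_erase_sub_mul_vandermondeProd hmu_inj, Fintype.card_fin,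
    Nat.choose_two_right, vandermondeProd]
  ring
end
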